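/- Let R be the polynomial ring over ℂ in countably many variables u_{1,N}, u_{2,N}, v_{1,N} (N ∈ ℕ), with the ℂ-derivation ∂ determined by ∂(u_{i,N}) = u_{i,N+1} and ∂(v_{1,N}) = v_{1,N+1}, and identify ℂ[u_1, u_2, v_1] with the subring of R generated by u_{1,0}, u_{2,0}, v_{1,0}. Then the smallest ∂-stable ℂ-subalgebra of R containing the algebra Λ^{2|1} of supersymmetric polynomials equals the smallest ∂-stable ℂ-subalgebra of R containing the power sums s_p = u_{1,0}^p + u_{2,0}^p − (−1)^p v_{1,0}^p for all p ≥ 1. -/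

import Mathlib

open MvPolynomial

/-- The algebra `R = ℂ[u_{1,N}, u_{2,N}, v_{1,N} : N ∈ ℕ]` of differential
polynomials: variable `(i, N)` is `∂^N u_{i+1}` for `i = 0, 1` and `∂^N v₁`
for `i = 2`. -/
abbrev DiffPoly : Type := MvPolynomial (Fin 3 × ℕ) ℂ

/-- The embedding `ℂ[u₁, u₂, v₁] ↪ R` sending the variables to the
index-`0` variables `u_{1,0}, u_{2,0}, v_{1,0}`. -/
noncomputable def emb : MvPolynomial (Fin 3) ℂ →ₐ[ℂ] DiffPoly :=
  rename (fun i => (i, 0))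

/-- A polynomial `f ∈ ℂ[u₁, u₂, v₁]` (with `u₁ = X 0`, `u₂ = X 1`, `v₁ = X 2`)
is supersymmetric if it is invariant under interchanging `u₁, u₂` and the
substitution `u₂ = t`, `v₁ = −t` yields a polynomial independent of `t`. -/
def IsSupersymmetric (f : MvPolynomial (Fin 3) ℂ) : Prop :=
  rename (Equiv.swap (0 : Fin 3) 1) f = f ∧
  ∀ t t' : ℂ, aeval ![X 0, C t, -(C t)] f = aeval ![X 0, C t', -(C t')] f

/-- The power sums `s_p = u₁^p + u₂^p − (−1)^p v₁^p`. -/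
noncomputable def powerSum (p : ℕ) : MvPolynomial (Fin 3) ℂ :=
  X 0 ^ p + X 1 ^ p - (-1 : MvPolynomial (Fin 3) ℂ) ^ p * X 2 ^ p

/-! The power sums generate the supersymmetric elementary polynomials `e_n` by Newton's identities,
and `e_{n+2} = Q v₁ⁿ` with `Q = (u₁ + v₁)(u₂ + v₁)`. A polynomial `f` symmetric in `u₁, u₂` is
`P(s₁, Q, v₁)` for some `P`; under `u₂ = t, v₁ = -t` this becomes `P(u₁, 0, -t)`, so supersymmetry
says that `P(x, 0, z)` does not depend on `z`. Hence `P = P(x, 0, 0) + y R`, and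
`f = P(s₁, 0, 0) + Q R(s₁, Q, v₁)` is a polynomial in the power sums. -/

theorem MvPolynomial.eval_aeval {σ τ R : Type*} [CommSemiring R] (x : τ → R)
    (g : σ → MvPolynomial τ R) (p : MvPolynomial σ R) :
    eval x (aeval g p) = eval (fun i => eval x (g i)) p := by
  rw [aeval_eq_bind₁]
  exact eval₂Hom_bind₁ _ _ _ _

theorem MvPolynomial.X_dvd_sub_aeval_update {σ R : Type*} [CommRing R] [DecidableEq σ] (i : σ)
    (p : MvPolynomial σ R) : X i ∣ p - aeval (Function.update X i 0) p := by
  induction p using MvPolynomial.induction_on with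
  | C a => simp
  | add p q hp hq => simpa only [map_add, add_sub_add_comm] using dvd_add hp hq
  | mul_X p j hp =>
    rw [map_mul, aeval_X]
    by_cases hj : j = i
    · subst hj
      simp
    · rw [Function.update_of_ne hj, ← sub_mul]
      exact dvd_mul_of_dvd_left hp _

local notation "𝒫" => MvPolynomial (Fin 3) ℂ

open Finset

noncomputable def powerSumSubalgebra : Subalgebra ℂ 𝒫 :=
  Algebra.adjoin ℂ (powerSum '' {p | 1 ≤ p})

lemma powerSum_mem_powerSumSubalgebra {p : ℕ} (hp : 1 ≤ p) :
    powerSum p ∈ powerSumSubalgebra :=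
  Algebra.subset_adjoin ⟨p, hp, rfl⟩

noncomputable def uvProd : 𝒫 := (X 0 + X 2) * (X 1 + X 2)

-- The supersymmetric elementary polynomials, coefficients of `(1 + u₁z)(1 + u₂z)/(1 - v₁z)`.
noncomputable def superElem : ℕ → 𝒫
  | 0 => 1
  | 1 => powerSum 1
  | n + 2 => uvProd * X 2 ^ n

lemma uvProd_mul_X_two_pow_succ (n : ℕ) :
    uvProd * X 2 ^ (n + 1) = (-1) ^ n * (powerSum (n + 3) - powerSum 1 * powerSum (n + 2)
      + uvProd * powerSum (n + 1) + X 2 * (powerSum (n + 2) - powerSum 1 * powerSum (n + 1))) := by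
  rcases neg_one_pow_eq_or 𝒫 n with h | h <;>
    simp only [powerSum, uvProd, pow_add, h] <;> ring

lemma sum_superElem_add_three (n : ℕ) :
    ∑ k ∈ range n, (-1) ^ k * powerSum (k + 1) * superElem (n + 3 - 1 - k) =
      X 2 * ∑ k ∈ range n, (-1) ^ k * powerSum (k + 1) * superElem (n + 2 - 1 - k) := by
  rw [mul_sum]
  refine sum_congr rfl fun k hk => ?_
  have hk : k < n := mem_range.mp hk
  rw [show n + 3 - 1 - k = n - 1 - k + 1 + 2 by omega, show n + 2 - 1 - k = n - 1 - k + 2 by omega]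
  simp only [superElem]
  ring

lemma superElem_newton : ∀ n : ℕ,
    (n : 𝒫) * superElem n =
      ∑ k ∈ range n, (-1) ^ k * powerSum (k + 1) * superElem (n - 1 - k)
  | 0 => by simp
  | 1 => by simp [superElem]
  | 2 => by
    simp only [sum_range_succ, range_zero, sum_empty, Nat.reduceSub, superElem, powerSum, uvProd]
    ring
  | n + 3 => by
    have ih := superElem_newton (n + 2)
    simp only [sum_range_succ, sum_superElem_add_three,
      show n + 3 - 1 - n = 2 by omega, show n + 3 - 1 - (n + 1) = 1 by omega,
      show n + 3 - 1 - (n + 2) = 0 by omega, show n + 2 - 1 - n = 1 by omega,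
      show n + 2 - 1 - (n + 1) = 0 by omega] at ih ⊢
    simp only [superElem] at ih ⊢
    push_cast at ih ⊢
    linear_combination X 2 * ih + uvProd_mul_X_two_pow_succ n

lemma superElem_mem_powerSumSubalgebra (n : ℕ) : superElem n ∈ powerSumSubalgebra := by
  induction n using Nat.strong_induction_on with
  | _ n ih =>
    rcases n.eq_zero_or_pos with rfl | hn
    · exact one_mem _
    have hn' : (n : ℂ) ≠ 0 := Nat.cast_ne_zero.mpr hn.ne'
    have h : superElem n = (n : ℂ)⁻¹ •
        ∑ k ∈ range n, (-1) ^ k * powerSum (k + 1) * superElem (n - 1 - k) := by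
      rw [← superElem_newton, ← map_natCast C, ← smul_eq_C_mul, inv_smul_smul₀ hn']
    rw [h]
    refine Subalgebra.smul_mem _ (sum_mem fun k hk => ?_) _
    have hk : k < n := mem_range.mp hk
    exact mul_mem (mul_mem (pow_mem (neg_mem (one_mem _)) k)
      (powerSum_mem_powerSumSubalgebra (by omega))) (ih _ (by omega))

lemma uvProd_mul_X_two_pow_mem_powerSumSubalgebra (n : ℕ) :
    uvProd * X 2 ^ n ∈ powerSumSubalgebra :=
  superElem_mem_powerSumSubalgebra (n + 2)

lemma uvProd_mem_powerSumSubalgebra : uvProd ∈ powerSumSubalgebra := by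
  simpa using uvProd_mul_X_two_pow_mem_powerSumSubalgebra 0

lemma swap_zero_one_apply_two : Equiv.swap (0 : Fin 3) 1 2 = 2 := by decide

-- `P(x, y, z) ↦ P(s₁, Q, v₁)` with `Q = uvProd`.
noncomputable def sQv : 𝒫 →ₐ[ℂ] 𝒫 := aeval ![powerSum 1, uvProd, X 2]

lemma add_rename_swap_mem_range (g : 𝒫) :
    g + rename (Equiv.swap 0 1) g ∈ sQv.range ∧
      g * X 0 + rename (Equiv.swap 0 1) g * X 1 ∈ sQv.range := by
  have he₁ : (X 0 + X 1 : 𝒫) ∈ sQv.range :=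
    ⟨X 0 - X 2, by simp [sQv, powerSum]⟩
  have he₂ : (X 0 * X 1 : 𝒫) ∈ sQv.range :=
    sQv.mem_range.mpr ⟨X 1 - X 0 * X 2, by
      simp only [sQv, map_sub, map_mul, aeval_X, Matrix.cons_val, powerSum, uvProd]; ring⟩
  have hv : (X 2 : 𝒫) ∈ sQv.range := ⟨X 2, by simp [sQv]⟩
  -- The pair is stable under multiplication by `u₁, u₂` because `u² = e₁ u - e₂` for both.
  induction g using MvPolynomial.induction_on with
  | C a =>
    simp only [rename_C, ← mul_add]
    exact ⟨add_mem (Subalgebra.algebraMap_mem _ a) (Subalgebra.algebraMap_mem _ a),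
      mul_mem (Subalgebra.algebraMap_mem _ a) he₁⟩
  | add p q hp hq =>
    simp only [map_add]
    constructor
    · convert add_mem hp.1 hq.1 using 1; ring
    · convert add_mem hp.2 hq.2 using 1; ring
  | mul_X p i hp =>
    obtain ⟨hS, hB⟩ := hp
    fin_cases i <;> simp only [Fin.zero_eta, Fin.mk_one, Fin.reduceFinMk, map_mul, rename_X,
      Equiv.swap_apply_left, Equiv.swap_apply_right, swap_zero_one_apply_two]
    · refine ⟨hB, ?_⟩
      convert sub_mem (mul_mem hB he₁) (mul_mem he₂ hS) using 1; ring
    · refine ⟨?_, ?_⟩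
      · convert sub_mem (mul_mem hS he₁) hB using 1; ring
      · convert mul_mem he₂ hS using 1; ring
    · refine ⟨?_, ?_⟩
      · convert mul_mem hS hv using 1; ring
      · convert mul_mem hB hv using 1; ring

lemma mem_range_of_rename_swap_eq {f : 𝒫} (hf : rename (Equiv.swap 0 1) f = f) :
    f ∈ sQv.range := by
  have h := Subalgebra.smul_mem _ (add_rename_swap_mem_range f).1 (2⁻¹ : ℂ)
  rwa [hf, ← two_smul ℂ, smul_smul, inv_mul_cancel₀ two_ne_zero, one_smul] at h

lemma IsSupersymmetric.eval_eq {f : 𝒫} (hf : IsSupersymmetric f) (x t : ℂ) :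
    eval ![x, t, -t] f = eval ![x, 0, 0] f := by
  have h := congrArg (eval fun _ => x) (hf.2 t 0)
  simp only [eval_aeval] at h
  convert h using 3 <;> funext i <;> fin_cases i <;> simp

lemma eval_sQv (P : 𝒫) (x t : ℂ) : eval ![x, t, -t] (sQv P) = eval ![x, 0, -t] P := by
  rw [sQv, eval_aeval]
  refine congrArg (fun y => eval y P) (funext fun i => ?_)
  fin_cases i <;> simp [powerSum, uvProd]

lemma uvProd_mul_sQv_mem_powerSumSubalgebra (R : 𝒫) :
    uvProd * sQv R ∈ powerSumSubalgebra := by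
  suffices ∀ n, uvProd * X 2 ^ n * sQv R ∈ powerSumSubalgebra by simpa using this 0
  induction R using MvPolynomial.induction_on with
  | C a =>
    intro n
    rw [sQv, aeval_C, algebraMap_eq, mul_comm, ← smul_eq_C_mul]
    exact Subalgebra.smul_mem _ (uvProd_mul_X_two_pow_mem_powerSumSubalgebra n) a
  | add p q hp hq =>
    intro n
    rw [map_add, mul_add]
    exact add_mem (hp n) (hq n)
  | mul_X p i hp =>
    intro n
    rw [map_mul, sQv, aeval_X, ← sQv]
    match i with
    | 0 =>
      rw [← mul_assoc]
      exact mul_mem (hp n) (powerSum_mem_powerSumSubalgebra le_rfl)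
    | 1 =>
      rw [← mul_assoc]
      exact mul_mem (hp n) uvProd_mem_powerSumSubalgebra
    | 2 =>
      convert hp (n + 1) using 1
      change _ * (_ * X 2) = _
      ring

lemma IsSupersymmetric.mem_powerSumSubalgebra {f : 𝒫} (hf : IsSupersymmetric f) :
    f ∈ powerSumSubalgebra := by
  obtain ⟨P, rfl⟩ := sQv.mem_range.mp (mem_range_of_rename_swap_eq hf.1)
  have hcancel : aeval (Function.update (X : Fin 3 → 𝒫) 1 0) P = aeval ![X 0, 0, 0] P := by
    refine MvPolynomial.funext fun w => ?_
    have h := hf.eval_eq (w 0) (-w 2)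
    have h₀ := eval_sQv P (w 0) 0
    rw [neg_zero] at h₀
    rw [eval_sQv, h₀, neg_neg] at h
    rw [eval_aeval, eval_aeval]
    refine (congrArg (eval · P) (funext fun i => ?_)).trans
      (h.trans (congrArg (eval · P) (funext fun i => ?_))) <;> fin_cases i <;> simp
  obtain ⟨R, hR⟩ := X_dvd_sub_aeval_update 1 P
  rw [sub_eq_iff_eq_add', hcancel] at hR
  rw [hR, map_add, map_mul, sQv, aeval_X, ← sQv, comp_aeval_apply]
  refine add_mem ?_ (uvProd_mul_sQv_mem_powerSumSubalgebra R)
  refine (aeval_range _).le.trans (Algebra.adjoin_le ?_) ⟨P, rfl⟩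
  rintro _ ⟨i, rfl⟩
  fin_cases i
  · simpa [sQv] using powerSum_mem_powerSumSubalgebra le_rfl
  all_goals simp

lemma isSupersymmetric_powerSum (p : ℕ) : IsSupersymmetric (powerSum p) := by
  refine ⟨?_, fun t t' => ?_⟩
  · simp only [powerSum, map_sub, map_add, map_mul, map_pow, map_neg, map_one, rename_X,
      Equiv.swap_apply_left, Equiv.swap_apply_right, swap_zero_one_apply_two]
    ring
  · simp [powerSum, ← mul_pow]

lemma forall_isSupersymmetric_mem_iff {B : Type*} [CommRing B] [Algebra ℂ B]
    (S : Subalgebra ℂ B) (φ : 𝒫 →ₐ[ℂ] B) :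
    (∀ f, IsSupersymmetric f → φ f ∈ S) ↔ ∀ p, 1 ≤ p → φ (powerSum p) ∈ S := by
  refine ⟨fun h p _ => h _ (isSupersymmetric_powerSum p), fun h f hf => ?_⟩
  have hle : powerSumSubalgebra.map φ ≤ S := by
    rw [powerSumSubalgebra, AlgHom.map_adjoin]
    exact Algebra.adjoin_le (by rintro _ ⟨_, ⟨p, hp, rfl⟩, rfl⟩; exact h p hp)
  exact hle ⟨f, hf.mem_powerSumSubalgebra, rfl⟩

theorem affine_supersymmetric_generated_by_powerSums_general
    (D : Derivation ℂ DiffPoly DiffPoly) :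
    sInf {A : Subalgebra ℂ DiffPoly |
        (∀ a ∈ A, D a ∈ A) ∧
        ∀ f : MvPolynomial (Fin 3) ℂ, IsSupersymmetric f → emb f ∈ A} =
      sInf {A : Subalgebra ℂ DiffPoly |
        (∀ a ∈ A, D a ∈ A) ∧
        ∀ p : ℕ, 1 ≤ p → emb (powerSum p) ∈ A} :=
  congrArg sInf (Set.ext fun A => and_congr_right fun _ => forall_isSupersymmetric_mem_iff A emb)

/-- Let `∂` be the derivation of `R` with `∂ u_{i,N} = u_{i,N+1}` and
`∂ v_{1,N} = v_{1,N+1}`.  The smallest `∂`-stable ℂ-subalgebra of `R`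
containing all supersymmetric polynomials `Λ^{2|1}` equals the smallest
`∂`-stable ℂ-subalgebra containing the power sums `s_p`, `p ≥ 1`. -/
theorem affine_supersymmetric_generated_by_powerSums
    (D : Derivation ℂ DiffPoly DiffPoly)
    (hD : ∀ (i : Fin 3) (N : ℕ), D (X (i, N)) = X (i, N + 1)) :
    sInf {A : Subalgebra ℂ DiffPoly |
        (∀ a ∈ A, D a ∈ A) ∧
        ∀ f : MvPolynomial (Fin 3) ℂ, IsSupersymmetric f → emb f ∈ A} =
      sInf {A : Subalgebra ℂ DiffPoly |
        (∀ a ∈ A, D a ∈ A) ∧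
        ∀ p : ℕ, 1 ≤ p → emb (powerSum p) ∈ A} :=
  affine_supersymmetric_generated_by_powerSums_general D
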